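/- arXiv:nlin/0206010 — 6 statements merged into one kernel-verified Lean document; each statement's English description precedes it below -/
import Mathlib

section
/- Let 𝒜 be an associative unital algebra over a field K, let λ, μ ∈ K, and let A, B ∈ 𝒜. Define f_ν(X) = (1 - νX)(ν·1 - X)⁻¹ whenever ν·1 - X is invertible. Assuming all the relevant elements are invertible (in particular A, λ·1 - A, the arguments of the outer f's, etc.), the functional equation f_μ( f_λ(A) · f_{λμ}(BA⁻¹) ) = f_{λμ}( f_λ(A) · f_μ(B) ) · A⁻¹ holds. -/
private lemma hir_inv_eq {M₀ : Type*} [MonoidWithZero M₀] {x y : M₀} (hx : IsUnit x)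
    (h : y * x = 1) : Ring.inverse x = y := by
  rw [← one_mul (Ring.inverse x), ← h, mul_assoc, Ring.mul_inverse_cancel x hx, mul_one]

private lemma hir_inv_eq' {M₀ : Type*} [MonoidWithZero M₀] {x y : M₀} (hx : IsUnit x)
    (h : x * y = 1) : Ring.inverse x = y := by
  rw [← mul_one (Ring.inverse x), ← h, ← mul_assoc, Ring.inverse_mul_cancel x hx, one_mul]

private lemma hir_comm_inv {M₀ : Type*} [MonoidWithZero M₀] {x u : M₀} (hx : IsUnit x)
    (h : u * x = x * u) : Ring.inverse x * u = u * Ring.inverse x := by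
  calc Ring.inverse x * u = Ring.inverse x * u * (x * Ring.inverse x) := by
        rw [Ring.mul_inverse_cancel x hx, mul_one]
    _ = Ring.inverse x * (u * x) * Ring.inverse x := by simp only [mul_assoc]
    _ = Ring.inverse x * (x * u) * Ring.inverse x := by rw [h]
    _ = Ring.inverse x * x * (u * Ring.inverse x) := by simp only [mul_assoc]
    _ = u * Ring.inverse x := by rw [Ring.inverse_mul_cancel x hx, one_mul]

private lemma hir_comm1 {K : Type*} [Field K] {R : Type*} [Ring R] [Algebra K R] (ν : K) (x : R) :
    ((1:R) - ν • x) * (ν • (1:R) - x) = (ν • (1:R) - x) * ((1:R) - ν • x) := by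
  simp only [smul_sub, sub_smul, smul_smul, mul_sub, sub_mul, smul_mul_assoc, mul_smul_comm,
    one_mul, mul_one, smul_one]
  ring_nf
  abel

theorem hirota_functional_equation {K : Type*} [Field K] {R : Type*} [Ring R] [Algebra K R]
    (l m : K) (a b : R)
    (f : K → R → R)
    (hf : ∀ (ν : K) (X : R), f ν X = ((1 : R) - ν • X) * Ring.inverse (ν • (1 : R) - X))
    (hA : IsUnit a)
    (h1 : IsUnit (l • (1 : R) - a))
    (h2 : IsUnit (m • (1 : R) - b))
    (h3 : IsUnit ((l * m) • (1 : R) - b * Ring.inverse a))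
    (h4 : IsUnit (m • (1 : R) - f l a * f (l * m) (b * Ring.inverse a)))
    (h5 : IsUnit ((l * m) • (1 : R) - f l a * f m b))
    (h6 : IsUnit (m • ((l * m) • a - b) - f l a * (a - (l * m) • b))) :
    f m (f l a * f (l * m) (b * Ring.inverse a))
      = f (l * m) (f l a * f m b) * Ring.inverse a := by
  have iaa : Ring.inverse a * a = 1 := Ring.inverse_mul_cancel a hA
  have aia : a * Ring.inverse a = 1 := Ring.mul_inverse_cancel a hA
  set ia := Ring.inverse a with hia
  set e1 := l • (1:R) - a with he1
  set e2 := m • (1:R) - b with he2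
  set e3 := (l * m) • a - b with he3
  set p := (1:R) - l • a with hp
  set q := (1:R) - m • b with hq
  set c := a - (l * m) • b with hc
  clear_value ia e1 e2 e3 p q c
  have he3u : IsUnit e3 := by
    have h := h3.mul hA
    rw [sub_mul, smul_mul_assoc, one_mul, mul_assoc, iaa, mul_one] at h
    rw [he3]; exact h
  have hcomm1 : p * e1 = e1 * p := by rw [hp, he1]; exact hir_comm1 l a
  have hcomm2 : q * e2 = e2 * q := by rw [hq, he2]; exact hir_comm1 m b
  have hinv1 : Ring.inverse e1 * p = p * Ring.inverse e1 := hir_comm_inv h1 hcomm1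
  have hinv2 : Ring.inverse e2 * q = q * Ring.inverse e2 := hir_comm_inv h2 hcomm2
  have ciae1 : ia * e1 = e1 * ia := by
    rw [he1, mul_sub, sub_mul, mul_smul_comm, smul_mul_assoc, mul_one, one_mul, iaa, aia]
  have hfl : f l a = p * Ring.inverse e1 := by rw [hf, hp, he1]
  have hfl' : f l a = Ring.inverse e1 * p := by rw [hfl, hinv1]
  have hfm : f m b = q * Ring.inverse e2 := by rw [hf, hq, he2]
  have hG : f (l * m) (b * ia) = c * Ring.inverse e3 := by
    have k1 : Ring.inverse ((l * m) • (1:R) - b * ia) = a * Ring.inverse e3 := by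
      apply hir_inv_eq' h3
      calc ((l * m) • (1:R) - b * ia) * (a * Ring.inverse e3)
          = (((l * m) • (1:R) - b * ia) * a) * Ring.inverse e3 := by rw [mul_assoc]
        _ = e3 * Ring.inverse e3 := by
            rw [sub_mul, smul_mul_assoc, one_mul, mul_assoc, iaa, mul_one, he3]
        _ = 1 := Ring.mul_inverse_cancel e3 he3u
    have k2 : (1:R) - (l * m) • (b * ia) = c * ia := by
      rw [hc, sub_mul, aia, smul_mul_assoc]
    rw [hf, k2, k1, mul_assoc, ← mul_assoc ia a, iaa, one_mul]
  set nn := e1 * e3 - m • (p * c) with hnn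
  set dd := m • (e1 * e3) - p * c with hdd
  set pp := e1 * e2 - (l * m) • (p * q) with hpp
  set qq := (l * m) • (e1 * e2) - p * q with hqq
  clear_value nn dd pp qq
  have hFG : f l a * f (l * m) (b * ia) = Ring.inverse e1 * (p * (c * Ring.inverse e3)) := by
    rw [hfl', hG]; simp only [mul_assoc]
  have hnum : (1:R) - m • (f l a * f (l * m) (b * ia))
      = Ring.inverse e1 * (nn * Ring.inverse e3) := by
    rw [hFG, hnn, sub_mul, mul_sub, smul_mul_assoc, mul_smul_comm]
    simp only [mul_assoc]
    rw [Ring.mul_inverse_cancel e3 he3u, mul_one, Ring.inverse_mul_cancel e1 h1]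
  have hden : m • (1:R) - f l a * f (l * m) (b * ia)
      = Ring.inverse e1 * (dd * Ring.inverse e3) := by
    rw [hFG, hdd, sub_mul, mul_sub, smul_mul_assoc, mul_smul_comm]
    simp only [mul_assoc]
    rw [Ring.mul_inverse_cancel e3 he3u, mul_one, Ring.inverse_mul_cancel e1 h1]
  have hddu : IsUnit dd := by
    have key : dd = e1 * (m • e3 - f l a * c) := by
      rw [hdd, hfl', mul_sub, mul_smul_comm]
      simp only [mul_assoc]
      rw [Ring.mul_inverse_cancel_left e1 (p * c) h1]
    rw [key]; exact h1.mul h6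
  have hinvden : Ring.inverse (m • (1:R) - f l a * f (l * m) (b * ia))
      = e3 * (Ring.inverse dd * e1) := by
    apply hir_inv_eq' h4
    rw [hden]
    simp only [mul_assoc]
    rw [Ring.inverse_mul_cancel_left e3 _ he3u, Ring.mul_inverse_cancel_left dd _ hddu,
      Ring.inverse_mul_cancel e1 h1]
  have hLHS : f m (f l a * f (l * m) (b * ia))
      = Ring.inverse e1 * (nn * (Ring.inverse dd * e1)) := by
    rw [hf m (f l a * f (l * m) (b * ia)), hnum, hinvden]
    simp only [mul_assoc]
    rw [Ring.inverse_mul_cancel_left e3 _ he3u]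
  have hFH : f l a * f m b = Ring.inverse e1 * (p * (q * Ring.inverse e2)) := by
    rw [hfl', hfm]; simp only [mul_assoc]
  have hnum2 : (1:R) - (l * m) • (f l a * f m b)
      = Ring.inverse e1 * (pp * Ring.inverse e2) := by
    rw [hFH, hpp, sub_mul, mul_sub, smul_mul_assoc, mul_smul_comm]
    simp only [mul_assoc]
    rw [Ring.mul_inverse_cancel e2 h2, mul_one, Ring.inverse_mul_cancel e1 h1]
  have hden2 : (l * m) • (1:R) - f l a * f m b
      = Ring.inverse e1 * (qq * Ring.inverse e2) := by
    rw [hFH, hqq, sub_mul, mul_sub, smul_mul_assoc, mul_smul_comm]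
    simp only [mul_assoc]
    rw [Ring.mul_inverse_cancel e2 h2, mul_one, Ring.inverse_mul_cancel e1 h1]
  have hqqu : IsUnit qq := by
    have key : qq = e1 * (((l * m) • (1:R) - f l a * f m b) * e2) := by
      rw [hden2]
      simp only [mul_assoc]
      rw [Ring.inverse_mul_cancel e2 h2, mul_one, Ring.mul_inverse_cancel_left e1 qq h1]
    rw [key]; exact h1.mul (h5.mul h2)
  have hinvden2 : Ring.inverse ((l * m) • (1:R) - f l a * f m b)
      = e2 * (Ring.inverse qq * e1) := by
    apply hir_inv_eq' h5
    rw [hden2]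
    simp only [mul_assoc]
    rw [Ring.inverse_mul_cancel_left e2 _ h2, Ring.mul_inverse_cancel_left qq _ hqqu,
      Ring.inverse_mul_cancel e1 h1]
  have hRHS : f (l * m) (f l a * f m b)
      = Ring.inverse e1 * (pp * (Ring.inverse qq * e1)) := by
    rw [hf (l * m) (f l a * f m b), hnum2, hinvden2]
    simp only [mul_assoc]
    rw [Ring.inverse_mul_cancel_left e2 _ h2]
  have key1 : pp = nn := by
    rw [hpp, hnn, hp, hq, hc, he1, he2, he3]
    simp only [smul_sub, sub_smul, smul_smul, mul_sub, sub_mul, smul_mul_assoc, mul_smul_comm,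
      one_mul, mul_one, smul_one]
    ring_nf
    abel
  have key2 : dd = a * qq := by
    rw [hdd, hqq, hp, hq, hc, he1, he2, he3]
    simp only [smul_sub, sub_smul, smul_smul, mul_sub, sub_mul, smul_mul_assoc, mul_smul_comm,
      one_mul, mul_one, smul_one]
    ring_nf
    abel
  have hinvdd : Ring.inverse dd = Ring.inverse qq * ia := by
    apply hir_inv_eq hddu
    rw [key2]
    simp only [mul_assoc]
    rw [hia, Ring.inverse_mul_cancel_left a qq hA, Ring.inverse_mul_cancel qq hqqu]
  rw [hLHS, hRHS, key1, hinvdd]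
  simp only [mul_assoc]
  rw [ciae1]
end

section
/- Let 𝒜 be an associative unital algebra, α₁, α₂ ∈ K, and x, x₁, x₂, x₁₂ ∈ 𝒜 with x₁ - x, x₂ - x, x₁₂ - x invertible. Then the cross-ratio equation α₁(x₁₂ - x₁)(x₁ - x)⁻¹ = α₂(x₁₂ - x₂)(x₂ - x)⁻¹ is equivalent to the three-leg form α₁(x₁ - x)⁻¹ - α₂(x₂ - x)⁻¹ = (α₁ - α₂)(x₁₂ - x)⁻¹. -/
theorem cross_ratio_three_leg_equiv {K : Type*} [Field K] {R : Type*} [Ring R] [Algebra K R]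
    (x x1 x2 x12 : R) (α₁ α₂ : K)
    (h1 : IsUnit (x1 - x)) (h2 : IsUnit (x2 - x)) (h12 : IsUnit (x12 - x)) :
    (α₁ • ((x12 - x1) * Ring.inverse (x1 - x)) = α₂ • ((x12 - x2) * Ring.inverse (x2 - x)))
    ↔ (α₁ • Ring.inverse (x1 - x) - α₂ • Ring.inverse (x2 - x)
        = (α₁ - α₂) • Ring.inverse (x12 - x)) := by
  have e1 : x12 - x1 = (x12 - x) - (x1 - x) := by abel
  have e2 : x12 - x2 = (x12 - x) - (x2 - x) := by abel
  rw [e1, e2]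
  set a := x1 - x with ha
  set b := x2 - x with hb
  set d := x12 - x with hd
  have c1 : a * Ring.inverse a = 1 := Ring.mul_inverse_cancel _ h1
  have c2 : b * Ring.inverse b = 1 := Ring.mul_inverse_cancel _ h2
  have c12 : d * Ring.inverse d = 1 := Ring.mul_inverse_cancel _ h12
  constructor
  · intro h
    rw [sub_mul d a, sub_mul d b, c1, c2] at h
    have key : d * (α₁ • Ring.inverse a - α₂ • Ring.inverse b)
        = d * ((α₁ - α₂) • Ring.inverse d) := by
      rw [mul_sub, mul_smul_comm, mul_smul_comm, mul_smul_comm, c12, sub_smul]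
      linear_combination (norm := module) h
    exact h12.mul_left_cancel key
  · intro h
    have key := congrArg (fun y => d * y) h
    simp only [mul_sub, mul_smul_comm, c12] at key
    rw [sub_mul d a, sub_mul d b, c1, c2]
    rw [sub_smul] at key
    linear_combination (norm := module) key
end

section
/- Let 𝒜 be an associative unital algebra, α₁, α₂ ∈ K, and x, x₁, x₂, x₁₂ ∈ 𝒜 with x₁ - x, x₂ - x, x₁₂ - x₁, x₁₂ - x₂ invertible. Then the cross-ratio equation α₁(x₁₂ - x₁)(x₁ - x)⁻¹ = α₂(x₁₂ - x₂)(x₂ - x)⁻¹ implies the right-divided form α₁(x₁ - x)⁻¹(x₁₂ - x₁) = α₂(x₂ - x)⁻¹(x₁₂ - x₂). -/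
theorem cross_ratio_right_divided {K : Type*} [Field K] {R : Type*} [Ring R] [Algebra K R]
    (x x1 x2 x12 : R) (α₁ α₂ : K)
    (h1 : IsUnit (x1 - x)) (h2 : IsUnit (x2 - x)) (h12 : IsUnit (x12 - x))
    (h121 : IsUnit (x12 - x1)) (h122 : IsUnit (x12 - x2))
    (hcr : α₁ • ((x12 - x1) * Ring.inverse (x1 - x))
      = α₂ • ((x12 - x2) * Ring.inverse (x2 - x))) :
    α₁ • (Ring.inverse (x1 - x) * (x12 - x1)) = α₂ • (Ring.inverse (x2 - x) * (x12 - x2)) := by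
  have d1 : x12 - x1 = (x12 - x) - (x1 - x) := by abel
  have d2 : x12 - x2 = (x12 - x) - (x2 - x) := by abel
  have e1 : (x12 - x1) * Ring.inverse (x1 - x)
      = (x12 - x) * Ring.inverse (x1 - x) - 1 := by
    rw [d1, sub_mul, Ring.mul_inverse_cancel _ h1]
  have e2 : (x12 - x2) * Ring.inverse (x2 - x)
      = (x12 - x) * Ring.inverse (x2 - x) - 1 := by
    rw [d2, sub_mul, Ring.mul_inverse_cancel _ h2]
  have key : (x12 - x) * (α₁ • Ring.inverse (x1 - x) - α₂ • Ring.inverse (x2 - x))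
      = (α₁ - α₂) • (1 : R) := by
    rw [mul_sub, mul_smul_comm, mul_smul_comm, sub_smul]
    rw [e1, e2, smul_sub, smul_sub] at hcr
    exact (sub_eq_sub_iff_sub_eq_sub.mp hcr)
  have hu : α₁ • Ring.inverse (x1 - x) - α₂ • Ring.inverse (x2 - x)
      = Ring.inverse (x12 - x) * ((α₁ - α₂) • (1 : R)) := by
    rw [← key, ← mul_assoc, Ring.inverse_mul_cancel _ h12, one_mul]
  have key2 : (α₁ • Ring.inverse (x1 - x) - α₂ • Ring.inverse (x2 - x)) * (x12 - x)
      = (α₁ - α₂) • (1 : R) := by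
    rw [hu, mul_assoc, smul_mul_assoc, one_mul, mul_smul_comm,
      Ring.inverse_mul_cancel _ h12]
  have f1 : Ring.inverse (x1 - x) * (x12 - x1)
      = Ring.inverse (x1 - x) * (x12 - x) - 1 := by
    rw [d1, mul_sub, Ring.inverse_mul_cancel _ h1]
  have f2 : Ring.inverse (x2 - x) * (x12 - x2)
      = Ring.inverse (x2 - x) * (x12 - x) - 1 := by
    rw [d2, mul_sub, Ring.inverse_mul_cancel _ h2]
  rw [f1, f2, smul_sub, smul_sub]
  rw [sub_mul, smul_mul_assoc, smul_mul_assoc, sub_smul] at key2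
  exact sub_eq_sub_iff_sub_eq_sub.mpr key2
end

section
/- Let 𝒜 be an associative unital algebra, α₁, α₂ ∈ K, and x, x₁, x₂, x₁₂ ∈ 𝒜 with all differences among the four points that appear invertible. If the cross-ratio equation α₁(x₁₂ - x₁)(x₁ - x)⁻¹ = α₂(x₁₂ - x₂)(x₂ - x)⁻¹ holds, then the 'dual' identity α₁(x₁ - x)⁻¹ - α₂(x₂ - x)⁻¹ = α₁(x₁₂ - x₂)⁻¹ - α₂(x₁₂ - x₁)⁻¹ holds. -/
private theorem cross_ratio_aux {K : Type*} [Field K] {R : Type*} [Ring R] [Algebra K R]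
    (a b c u v ia ib ic iu iv : R) (α₁ α₂ : K)
    (ha1 : a * ia = 1) (ha2 : ia * a = 1)
    (hb1 : b * ib = 1) (hb2 : ib * b = 1)
    (hc1 : c * ic = 1) (hc2 : ic * c = 1)
    (hu1 : u * iu = 1) (hu2 : iu * u = 1)
    (hv1 : v * iv = 1) (hv2 : iv * v = 1)
    (hu : u = c - a) (hv : v = c - b)
    (hcr : α₁ • (u * ia) = α₂ • (v * ib)) :
    α₁ • ia - α₂ • ib = α₁ • iv - α₂ • iu := by
  have hcr' : α₁ • (c * ia) - α₁ • (1:R) = α₂ • (c * ib) - α₂ • (1:R) := by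
    have e1 : u * ia = c * ia - 1 := by rw [hu, sub_mul, ha1]
    have e2 : v * ib = c * ib - 1 := by rw [hv, sub_mul, hb1]
    rw [e1, e2, smul_sub, smul_sub] at hcr
    exact hcr
  have stepA : c * (α₁ • ia - α₂ • ib) = (α₁ - α₂) • (1:R) := by
    rw [mul_sub, mul_smul_comm, mul_smul_comm]
    linear_combination (norm := module) hcr'
  have stepB : α₁ • ia - α₂ • ib = (α₁ - α₂) • ic := by
    have h := congrArg (fun z => ic * z) stepA
    rwa [← mul_assoc, hc2, one_mul, mul_smul_comm, mul_one] at h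
  have key : ∀ X : R, iu * (u * X * v) * iv = X := by
    intro X
    calc iu * (u * X * v) * iv = (iu * u) * X * (v * iv) := by noncomm_ring
      _ = X := by rw [hu2, hv1, one_mul, mul_one]
  have stepC'' : (α₁ - α₂) • (a * ic * b) = α₁ • b - α₂ • a := by
    have e : a * ((α₁ - α₂) • ic) * b = (α₁ - α₂) • (a * ic * b) := by
      rw [mul_smul_comm, smul_mul_assoc]
    rw [← e, ← stepB, mul_sub, sub_mul, mul_smul_comm, mul_smul_comm,
      smul_mul_assoc, smul_mul_assoc, ha1, one_mul, mul_assoc, hb2, mul_one]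
  have expand : u * ic * v = c - b - a + a * ic * b := by
    rw [hu, hv]
    calc (c - a) * ic * (c - b) = (c * ic - a * ic) * (c - b) := by rw [sub_mul]
      _ = (1 - a * ic) * (c - b) := by rw [hc1]
      _ = c - b - (a * ic * c - a * ic * b) := by noncomm_ring
      _ = c - b - (a - a * ic * b) := by rw [mul_assoc a ic c, hc2, mul_one]
      _ = c - b - a + a * ic * b := by noncomm_ring
  have hC : u * ((α₁ - α₂) • ic) * v = α₁ • u - α₂ • v := by
    have e : u * ((α₁ - α₂) • ic) * v = (α₁ - α₂) • (u * ic * v) := by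
      rw [mul_smul_comm, smul_mul_assoc]
    rw [e, expand, hu, hv]
    linear_combination (norm := module) stepC''
  have hD : u * (α₁ • iv - α₂ • iu) * v = α₁ • u - α₂ • v := by
    rw [mul_sub, sub_mul, mul_smul_comm, mul_smul_comm, smul_mul_assoc, smul_mul_assoc,
      mul_assoc u iv v, hv2, mul_one, hu1, one_mul]
  have stepE : (α₁ - α₂) • ic = α₁ • iv - α₂ • iu := by
    rw [← key ((α₁ - α₂) • ic), ← key (α₁ • iv - α₂ • iu), hC, hD]
  rw [stepB, stepE]

theorem cross_ratio_dual_identity {K : Type*} [Field K] {R : Type*} [Ring R] [Algebra K R]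
    (x x1 x2 x12 : R) (α₁ α₂ : K)
    (h1 : IsUnit (x1 - x)) (h2 : IsUnit (x2 - x)) (h12 : IsUnit (x12 - x))
    (h121 : IsUnit (x12 - x1)) (h122 : IsUnit (x12 - x2))
    (hcr : α₁ • ((x12 - x1) * Ring.inverse (x1 - x))
      = α₂ • ((x12 - x2) * Ring.inverse (x2 - x))) :
    α₁ • Ring.inverse (x1 - x) - α₂ • Ring.inverse (x2 - x)
      = α₁ • Ring.inverse (x12 - x2) - α₂ • Ring.inverse (x12 - x1) := by
  exact cross_ratio_aux (x1 - x) (x2 - x) (x12 - x) (x12 - x1) (x12 - x2)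
    (Ring.inverse (x1 - x)) (Ring.inverse (x2 - x)) (Ring.inverse (x12 - x))
    (Ring.inverse (x12 - x1)) (Ring.inverse (x12 - x2)) α₁ α₂
    (Ring.mul_inverse_cancel _ h1) (Ring.inverse_mul_cancel _ h1)
    (Ring.mul_inverse_cancel _ h2) (Ring.inverse_mul_cancel _ h2)
    (Ring.mul_inverse_cancel _ h12) (Ring.inverse_mul_cancel _ h12)
    (Ring.mul_inverse_cancel _ h121) (Ring.inverse_mul_cancel _ h121)
    (Ring.mul_inverse_cancel _ h122) (Ring.inverse_mul_cancel _ h122)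
    (by abel) (by abel) hcr
end

section
/- Let 𝒜 be an associative unital algebra, α₁, α₃ ∈ K with α₃ ≠ 0, and x, x₁, x₃, x₁₃ ∈ 𝒜 with x₁ - x, x₃ - x, x₃ - x₁ invertible and with 1 + α₁α₃⁻¹(x - x₁)⁻¹(x₃ - x) invertible. If the cross-ratio equation α₁(x₁₃ - x₁)(x₁ - x)⁻¹ = α₃(x₁₃ - x₃)(x₃ - x)⁻¹ holds, then x₁₃ - x₁ = ((x₃ - x) + (x - x₁)) · (1 + α₁α₃⁻¹(x - x₁)⁻¹(x₃ - x))⁻¹, i.e. x₁₃ - x₁ is given by the fractional-linear action of the matrix L = [[1, x - x₁],[α₁α₃⁻¹(x - x₁)⁻¹, 1]] on x₃ - x. -/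
theorem cross_ratio_moebius_solution {K : Type*} [Field K] {R : Type*} [Ring R] [Algebra K R]
    (x x1 x3 x13 : R) (α₁ α₃ : K) (hα₃ : α₃ ≠ 0)
    (h1 : IsUnit (x1 - x)) (h3 : IsUnit (x3 - x)) (h31 : IsUnit (x3 - x1))
    (hden : IsUnit ((1 : R) + (α₁ * α₃⁻¹) • (Ring.inverse (x - x1) * (x3 - x))))
    (hcr : α₁ • ((x13 - x1) * Ring.inverse (x1 - x))
      = α₃ • ((x13 - x3) * Ring.inverse (x3 - x))) :
    x13 - x1 = ((x3 - x) + (x - x1))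
      * Ring.inverse ((1 : R) + (α₁ * α₃⁻¹) • (Ring.inverse (x - x1) * (x3 - x))) := by
  set D := (1 : R) + (α₁ * α₃⁻¹) • (Ring.inverse (x - x1) * (x3 - x)) with hD
  have hxx1 : x - x1 = -(x1 - x) := by abel
  have hu : IsUnit (x - x1) := by rw [hxx1]; exact h1.neg
  -- multiply hcr on the right by (x3 - x)
  have h2 : (α₁ * α₃⁻¹) • ((x13 - x1) * (Ring.inverse (x1 - x) * (x3 - x)))
      = x13 - x3 := by
    have := congrArg (fun z => α₃⁻¹ • (z * (x3 - x))) hcr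
    simp only [smul_mul_assoc, smul_smul, mul_assoc,
      Ring.inverse_mul_cancel _ h3, mul_one] at this
    rw [← smul_smul] at this
    rw [mul_comm α₁ α₃⁻¹, ← smul_smul, this, inv_mul_cancel₀ hα₃, one_smul]
  have hneg : Ring.inverse (x - x1) = - Ring.inverse (x1 - x) := by
    apply hu.mul_left_cancel
    rw [Ring.mul_inverse_cancel _ hu, mul_neg, hxx1, neg_mul, neg_neg,
      Ring.mul_inverse_cancel _ h1]
  have key : (x13 - x1) * D = (x3 - x) + (x - x1) := by
    rw [hD, hneg, mul_add, mul_one, mul_smul_comm, neg_mul, mul_neg,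
      smul_neg, h2]
    abel
  rw [← key, mul_assoc, Ring.mul_inverse_cancel _ hden, mul_one]
end

section
/- Let 𝒜 be an associative unital algebra and x, x₁, x₂, x₁₂ ∈ 𝒜 satisfying the cross-ratio equation α₁(x₁₂ - x₁)(x₁ - x)⁻¹ = α₂(x₁₂ - x₂)(x₂ - x)⁻¹ with α₁, α₂ ∈ K, and with all differences among the points appearing below invertible. For λ ∈ K and an oriented edge (x,u) with label α define L(u,x,α;λ) = [[1, x - u],[λα(x - u)⁻¹, 1]] ∈ M₂(𝒜). Then the zero curvature relation L(x₁₂,x₁,α₂;λ)·L(x₁,x,α₁;λ) = L(x₁₂,x₂,α₁;λ)·L(x₂,x,α₂;λ) holds for all λ ∈ K. -/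
/-!
Put `r = x₁₂ - x`. Since `x₁₂ - xᵢ = r - (xᵢ - x)`, the cross-ratio equation says
`r * (α₁ (x₁ - x)⁻¹ - α₂ (x₂ - x)⁻¹) = α₁ - α₂`, and as `r` is invertible the bracket is the
scalar multiple `(α₁ - α₂) r⁻¹`, which therefore also satisfies the same equation with `r` on the
right; that is the right-divided form. Inverting both of its sides and applying the resolvent
identity `a⁻¹ - b⁻¹ = a⁻¹ (b - a) b⁻¹` yields the dual identity. The cross-ratio equation, the
inverted right-divided form and the dual identity are the equalities of the (1,1), (2,2) and (2,1)
entries of the two products.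
-/

open scoped Ring

section RingInverse

variable {R : Type*} [Ring R]

theorem Ring.inverse_neg (a : R) : (-a)⁻¹ʳ = -a⁻¹ʳ := by
  by_cases ha : IsUnit a
  · obtain ⟨u, rfl⟩ := ha
    rw [← Units.val_neg, Ring.inverse_unit, Ring.inverse_unit, inv_neg, Units.val_neg]
  · rw [Ring.inverse_non_unit _ ha, Ring.inverse_non_unit _ ((IsUnit.neg_iff a).not.mpr ha),
      neg_zero]

theorem Ring.inverse_sub_comm (a b : R) : (a - b)⁻¹ʳ = -(b - a)⁻¹ʳ := by
  rw [← Ring.inverse_neg, neg_sub]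

theorem sub_mul_inverse_sub {a b : R} (h : IsUnit (a - b)) (c : R) :
    (c - a) * (a - b)⁻¹ʳ = (c - b) * (a - b)⁻¹ʳ - 1 := by
  rw [← Ring.mul_inverse_cancel _ h, ← sub_mul, sub_sub_sub_cancel_right]

theorem inverse_sub_mul_sub {a b : R} (h : IsUnit (a - b)) (c : R) :
    (a - b)⁻¹ʳ * (c - a) = (a - b)⁻¹ʳ * (c - b) - 1 := by
  rw [← Ring.inverse_mul_cancel _ h, ← mul_sub, sub_sub_sub_cancel_right]

end RingInverse

theorem smul_eq_smul_of_smul_eq_of_mul_eq_one {K M : Type*} [Monoid M] [SMul K M]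
    [IsScalarTower K M M] [SMulCommClass K M M] {a a' b b' : M} {α β : K}
    (h : α • a = β • b) (ha : a' * a = 1) (hb : b * b' = 1) : β • a' = α • b' :=
  calc β • a' = a' * (β • b) * b' := by rw [mul_smul_comm, smul_mul_assoc, mul_assoc, hb, mul_one]
    _ = α • b' := by rw [← h, mul_smul_comm, ha, smul_mul_assoc, one_mul]

section CrossRatio

variable {K R : Type*} [CommRing K] [Ring R] [Algebra K R] {x x₁ x₂ x₁₂ : R} {α₁ α₂ : K}

theorem crossRatio_three_leg (h₁ : IsUnit (x₁ - x)) (h₂ : IsUnit (x₂ - x))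
    (h₁₂ : IsUnit (x₁₂ - x))
    (hcr : α₁ • ((x₁₂ - x₁) * (x₁ - x)⁻¹ʳ) = α₂ • ((x₁₂ - x₂) * (x₂ - x)⁻¹ʳ)) :
    α₁ • (x₁ - x)⁻¹ʳ - α₂ • (x₂ - x)⁻¹ʳ = (α₁ - α₂) • (x₁₂ - x)⁻¹ʳ := by
  have hleft : (x₁₂ - x) * (α₁ • (x₁ - x)⁻¹ʳ - α₂ • (x₂ - x)⁻¹ʳ) = (α₁ - α₂) • 1 := by
    rw [sub_mul_inverse_sub h₁, sub_mul_inverse_sub h₂] at hcr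
    rw [mul_sub, mul_smul_comm, mul_smul_comm, sub_smul]
    linear_combination (norm := module) hcr
  rw [← Ring.inverse_mul_cancel_left _ (_ - _) h₁₂, hleft, mul_smul_comm, mul_one]

theorem crossRatio_right_div (h₁ : IsUnit (x₁ - x)) (h₂ : IsUnit (x₂ - x))
    (h₁₂ : IsUnit (x₁₂ - x))
    (hcr : α₁ • ((x₁₂ - x₁) * (x₁ - x)⁻¹ʳ) = α₂ • ((x₁₂ - x₂) * (x₂ - x)⁻¹ʳ)) :
    α₁ • ((x₁ - x)⁻¹ʳ * (x₁₂ - x₁)) = α₂ • ((x₂ - x)⁻¹ʳ * (x₁₂ - x₂)) := by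
  have hright := congrArg (· * (x₁₂ - x)) (crossRatio_three_leg h₁ h₂ h₁₂ hcr)
  simp only [sub_mul, smul_mul_assoc, Ring.inverse_mul_cancel _ h₁₂] at hright
  rw [inverse_sub_mul_sub h₁, inverse_sub_mul_sub h₂]
  linear_combination (norm := module) hright

theorem crossRatio_right_div_inverse (h₁ : IsUnit (x₁ - x)) (h₂ : IsUnit (x₂ - x))
    (h₁₂ : IsUnit (x₁₂ - x)) (h₁₂₁ : IsUnit (x₁₂ - x₁)) (h₁₂₂ : IsUnit (x₁₂ - x₂))
    (hcr : α₁ • ((x₁₂ - x₁) * (x₁ - x)⁻¹ʳ) = α₂ • ((x₁₂ - x₂) * (x₂ - x)⁻¹ʳ)) :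
    α₂ • ((x₁₂ - x₁)⁻¹ʳ * (x₁ - x)) = α₁ • ((x₁₂ - x₂)⁻¹ʳ * (x₂ - x)) := by
  refine smul_eq_smul_of_smul_eq_of_mul_eq_one (crossRatio_right_div h₁ h₂ h₁₂ hcr) ?_ ?_
  · rw [mul_assoc, Ring.mul_inverse_cancel_left _ _ h₁, Ring.inverse_mul_cancel _ h₁₂₁]
  · rw [mul_assoc, Ring.mul_inverse_cancel_left _ _ h₁₂₂, Ring.inverse_mul_cancel _ h₂]

theorem crossRatio_dual (h₁ : IsUnit (x₁ - x)) (h₂ : IsUnit (x₂ - x))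
    (h₁₂ : IsUnit (x₁₂ - x)) (h₁₂₁ : IsUnit (x₁₂ - x₁)) (h₁₂₂ : IsUnit (x₁₂ - x₂))
    (hcr : α₁ • ((x₁₂ - x₁) * (x₁ - x)⁻¹ʳ) = α₂ • ((x₁₂ - x₂) * (x₂ - x)⁻¹ʳ)) :
    α₁ • (x₁ - x)⁻¹ʳ - α₂ • (x₂ - x)⁻¹ʳ = α₁ • (x₁₂ - x₂)⁻¹ʳ - α₂ • (x₁₂ - x₁)⁻¹ʳ := by
  have resolvent (y : R) (hy : IsUnit (x₁₂ - y)) :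
      (x₁₂ - y)⁻¹ʳ * (y - x) * (x₁₂ - x)⁻¹ʳ = (x₁₂ - y)⁻¹ʳ - (x₁₂ - x)⁻¹ʳ := by
    rw [Ring.inverse_sub_inverse (iff_of_true hy h₁₂), sub_sub_sub_cancel_left]
  have h := congrArg (· * (x₁₂ - x)⁻¹ʳ)
    (crossRatio_right_div_inverse h₁ h₂ h₁₂ h₁₂₁ h₁₂₂ hcr)
  simp only [smul_mul_assoc, resolvent x₁ h₁₂₁, resolvent x₂ h₁₂₂] at h
  rw [crossRatio_three_leg h₁ h₂ h₁₂ hcr]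
  linear_combination (norm := module) h

end CrossRatio

section TransitionMatrix

variable {K R : Type*} [CommRing K] [Ring R] [Algebra K R]

noncomputable def transitionMatrix (u x : R) (α l : K) : Matrix (Fin 2) (Fin 2) R :=
  !![1, x - u; (l * α) • (x - u)⁻¹ʳ, 1]

theorem transitionMatrix_mul (u y x : R) (α β l : K) :
    transitionMatrix u y β l * transitionMatrix y x α l =
      !![1 + (l * α) • ((u - y) * (y - x)⁻¹ʳ), x - u;
        -(l • (β • (u - y)⁻¹ʳ + α • (y - x)⁻¹ʳ)), 1 + (l * β) • ((u - y)⁻¹ʳ * (y - x))] := by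
  rw [transitionMatrix, transitionMatrix, Matrix.mul_fin_two, Ring.inverse_sub_comm y u,
    Ring.inverse_sub_comm x y, ← neg_sub u y, ← neg_sub y x]
  ext i j
  fin_cases i <;> fin_cases j <;> dsimp <;>
    simp only [one_mul, mul_one, neg_mul, mul_neg, neg_neg, mul_smul_comm, smul_mul_assoc] <;>
    module

end TransitionMatrix

theorem cross_ratio_zero_curvature {K : Type*} [Field K] {R : Type*} [Ring R] [Algebra K R]
    (x x1 x2 x12 : R) (α₁ α₂ : K)
    (h1 : IsUnit (x1 - x)) (h2 : IsUnit (x2 - x)) (h12 : IsUnit (x12 - x))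
    (h121 : IsUnit (x12 - x1)) (h122 : IsUnit (x12 - x2))
    (hcr : α₁ • ((x12 - x1) * Ring.inverse (x1 - x))
      = α₂ • ((x12 - x2) * Ring.inverse (x2 - x)))
    (L : R → R → K → K → Matrix (Fin 2) (Fin 2) R)
    (hL : ∀ (u x : R) (α l : K),
      L u x α l = !![(1 : R), x - u; (l * α) • Ring.inverse (x - u), (1 : R)]) :
    ∀ l : K, L x12 x1 α₂ l * L x1 x α₁ l = L x12 x2 α₁ l * L x2 x α₂ l := by
  obtain rfl : L = transitionMatrix := by
    funext u y α l
    exact hL u y α l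
  intro l
  rw [transitionMatrix_mul, transitionMatrix_mul]
  ext i j
  fin_cases i <;> fin_cases j <;> dsimp
  · rw [mul_smul, hcr, ← mul_smul]
  · linear_combination (norm := module) -l • crossRatio_dual h1 h2 h12 h121 h122 hcr
  · rw [mul_smul, crossRatio_right_div_inverse h1 h2 h12 h121 h122 hcr, ← mul_smul]
end
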